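/- arXiv:2503.10945 — 8 statements merged into one kernel-verified Lean document; each statement's English description precedes it below -/
import Mathlib

section
/- Let f_pp(α) = 1 − α be the trade-off curve of a mechanism achieving perfect privacy. For any valid trade-off curve f, Δ↔(f_pp, f) = η(f)/2. -/
/-
Since `f ≤ 1 - α = f_pp`, the divergence `Δ(f, f_pp)` vanishes. For `Δ(f_pp, f)`, the shifted
inequality `f_pp(α + κ) - κ ≤ f(α)` is automatic when `α + κ > 1` (as `f ≥ 0`), and otherwise
reads `1 - α - f(α) ≤ 2κ`; so the admissible shifts are exactly `κ ≥ η(f)/2`.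
-/

/-- A valid trade-off curve: convex, continuous, non-increasing on `[0,1]`,
with values in `[0, 1-α]`, extended by `0` beyond `1`. -/
def IsTradeoff (f : ℝ → ℝ) : Prop :=
  ConvexOn ℝ (Set.Icc 0 1) f ∧
  ContinuousOn f (Set.Icc 0 1) ∧
  AntitoneOn f (Set.Icc 0 1) ∧
  (∀ α ∈ Set.Icc (0:ℝ) 1, 0 ≤ f α ∧ f α ≤ 1 - α) ∧
  (∀ x : ℝ, 1 < x → f x = 0)

/-- The advantage `η(f) = sup_{α ∈ [0,1]} (1 - α - f α)`. -/
noncomputable def adv (f : ℝ → ℝ) : ℝ :=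
  sSup ((fun α => 1 - α - f α) '' Set.Icc (0:ℝ) 1)

/-- The Δ-divergence `Δ(f, g) = inf {κ ≥ 0 : ∀ α ∈ [0,1], f (α + κ) - κ ≤ g α}`. -/
noncomputable def deltaDiv (f g : ℝ → ℝ) : ℝ :=
  sInf {κ : ℝ | 0 ≤ κ ∧ ∀ α ∈ Set.Icc (0:ℝ) 1, f (α + κ) - κ ≤ g α}

/-- Symmetrized Δ-divergence. -/
noncomputable def deltaSym (f g : ℝ → ℝ) : ℝ :=
  max (deltaDiv f g) (deltaDiv g f)

/-- The perfect-privacy trade-off curve `f_pp(α) = 1 - α`, extended by `0` beyond `1`. -/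
noncomputable def perfectPrivacy : ℝ → ℝ := fun x => if x ≤ 1 then 1 - x else 0

open Set

lemma perfectPrivacy_of_le_one {x : ℝ} (hx : x ≤ 1) : perfectPrivacy x = 1 - x :=
  if_pos hx

lemma perfectPrivacy_of_one_lt {x : ℝ} (hx : 1 < x) : perfectPrivacy x = 0 :=
  if_neg hx.not_ge

section Adv

variable {f : ℝ → ℝ} (hf : ∀ α ∈ Icc (0:ℝ) 1, 0 ≤ f α)
include hf

lemma adv_le_iff {c : ℝ} : adv f ≤ c ↔ ∀ α ∈ Icc (0:ℝ) 1, 1 - α - f α ≤ c := by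
  have hbdd : BddAbove ((fun α => 1 - α - f α) '' Icc (0:ℝ) 1) := by
    refine ⟨1, forall_mem_image.2 fun α hα => ?_⟩
    linarith [hf α hα, hα.1]
  rw [adv, csSup_le_iff hbdd ((nonempty_Icc.2 zero_le_one).image _), forall_mem_image]

lemma le_adv {α : ℝ} (hα : α ∈ Icc (0:ℝ) 1) : 1 - α - f α ≤ adv f :=
  (adv_le_iff hf).1 le_rfl α hα

lemma adv_nonneg (hf₀ : f 0 ≤ 1) : 0 ≤ adv f := by
  linarith [le_adv hf (left_mem_Icc.2 zero_le_one)]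

end Adv

lemma deltaDiv_nonneg (f g : ℝ → ℝ) : 0 ≤ deltaDiv f g :=
  Real.sInf_nonneg fun _ hκ => hκ.1

lemma deltaDiv_eq_zero_of_le {f g : ℝ → ℝ} (hfg : ∀ α ∈ Icc (0:ℝ) 1, f α ≤ g α) :
    deltaDiv f g = 0 := by
  refine le_antisymm (csInf_le ⟨0, fun _ hκ => hκ.1⟩ ⟨le_rfl, fun α hα => ?_⟩)
    (deltaDiv_nonneg f g)
  simpa using hfg α hα

lemma perfectPrivacy_shift_le_iff {f : ℝ → ℝ} {α κ : ℝ} (hκ : 0 ≤ κ)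
    (hfα : 0 ≤ f α) : perfectPrivacy (α + κ) - κ ≤ f α ↔ 1 - α - f α ≤ 2 * κ := by
  rcases le_or_gt (α + κ) 1 with h | h
  · rw [perfectPrivacy_of_le_one h]
    constructor <;> intro <;> linarith
  · rw [perfectPrivacy_of_one_lt h]
    constructor <;> intro <;> linarith

lemma deltaDiv_perfectPrivacy_left {f : ℝ → ℝ} (hf : ∀ α ∈ Icc (0:ℝ) 1, 0 ≤ f α)
    (hf₀ : f 0 ≤ 1) : deltaDiv perfectPrivacy f = adv f / 2 := by
  have hη := adv_nonneg hf hf₀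
  suffices {κ : ℝ | 0 ≤ κ ∧ ∀ α ∈ Icc (0:ℝ) 1, perfectPrivacy (α + κ) - κ ≤ f α}
      = Ici (adv f / 2) by
    rw [deltaDiv, this, csInf_Ici]
  ext κ
  simp only [mem_ofPred_eq, mem_Ici]
  constructor
  · rintro ⟨hκ, hshift⟩
    have : adv f ≤ 2 * κ := (adv_le_iff hf).2 fun α hα =>
      (perfectPrivacy_shift_le_iff hκ (hf α hα)).1 (hshift α hα)
    linarith
  · intro hκ
    have hκ₀ : 0 ≤ κ := by linarith
    refine ⟨hκ₀, fun α hα => (perfectPrivacy_shift_le_iff hκ₀ (hf α hα)).2 ?_⟩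
    linarith [le_adv hf hα]

/-- For any valid trade-off curve `f`, `Δ↔(f_pp, f) = η(f) / 2`. -/
theorem deltaSym_perfectPrivacy_eq_half_adv (f : ℝ → ℝ) (hf : IsTradeoff f) :
    deltaSym perfectPrivacy f = adv f / 2 := by
  obtain ⟨-, -, -, hbd, -⟩ := hf
  have hnonneg : ∀ α ∈ Icc (0:ℝ) 1, 0 ≤ f α := fun α hα => (hbd α hα).1
  have hf₀ : f 0 ≤ 1 := by simpa using (hbd 0 (left_mem_Icc.2 zero_le_one)).2
  have hright : deltaDiv f perfectPrivacy = 0 := deltaDiv_eq_zero_of_le fun α hα => by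
    rw [perfectPrivacy_of_le_one hα.2]
    exact (hbd α hα).2
  rw [deltaSym, deltaDiv_perfectPrivacy_left hnonneg hf₀, hright]
  exact max_eq_left (div_nonneg (adv_nonneg hnonneg hf₀) zero_le_two)
end

section
/- For every ε ≥ 0, let μ = −2Φ⁻¹(1/(e^ε + 1)). Then for all α ∈ [0,1], the Gaussian trade-off curve satisfies f_μ(α) ≤ max{0, 1 − e^ε·α, e^{−ε}(1 − α)}; that is, the pure-DP trade-off curve f_{ε,0} pointwise dominates the Gaussian trade-off curve with parameter μ = −2Φ⁻¹(1/(e^ε + 1)). -/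
/-- The standard normal CDF `Φ`. -/
noncomputable def stdGaussianCDF (x : ℝ) : ℝ :=
  ∫ t in Set.Iic x, Real.exp (-(t ^ 2) / 2) / Real.sqrt (2 * Real.pi)

open MeasureTheory Real Set Filter


noncomputable def gpdf (x : ℝ) : ℝ := Real.exp (-(x ^ 2) / 2) / Real.sqrt (2 * Real.pi)

lemma gpdf_pos (x : ℝ) : 0 < gpdf x :=
  div_pos (Real.exp_pos _) (Real.sqrt_pos.2 (by positivity))

lemma gpdf_cont : Continuous gpdf := by
  unfold gpdf; fun_prop

lemma gpdf_integrable : Integrable gpdf := by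
  have h : Integrable (fun x : ℝ => Real.exp (-(1/2) * x ^ 2)) := integrable_exp_neg_mul_sq (by norm_num)
  have := h.div_const (Real.sqrt (2 * Real.pi))
  convert this using 2 with x
  unfold gpdf
  rw [div_eq_div_iff (by positivity) (by positivity)]
  ring_nf

lemma gpdf_integral : ∫ x, gpdf x = 1 := by
  have h := integral_gaussian (1/2)
  have h2 : ∫ x : ℝ, Real.exp (-(x ^ 2) / 2) = Real.sqrt (2 * Real.pi) := by
    rw [show (Real.sqrt (2 * Real.pi)) = Real.sqrt (Real.pi / (1/2)) by norm_num [mul_comm]]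
    rw [← h]; congr 1 with x; ring_nf
  unfold gpdf
  rw [integral_div, h2, div_self (by positivity)]



lemma cdf_eq (x : ℝ) : stdGaussianCDF x = ∫ t in Set.Iic x, gpdf t := rfl

lemma cdf_sub (a b : ℝ) (h : a ≤ b) :
    stdGaussianCDF b - stdGaussianCDF a = ∫ t in Set.Ioc a b, gpdf t := by
  rw [cdf_eq, cdf_eq, sub_eq_iff_eq_add, add_comm,
    ← MeasureTheory.setIntegral_union (by
      simp only [Set.disjoint_left, Set.mem_Iic, Set.mem_Ioc]
      intro x hx1 hx2; linarith [hx2.1]) measurableSet_Ioc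
    (gpdf_integrable.integrableOn) (gpdf_integrable.integrableOn),
    Set.Iic_union_Ioc_eq_Iic h]

lemma cdf_strictMono : StrictMono stdGaussianCDF := by
  intro a b hab
  have h := cdf_sub a b hab.le
  have hpos : 0 < ∫ t in Set.Ioc a b, gpdf t := by
    rw [MeasureTheory.setIntegral_pos_iff_support_of_nonneg_ae]
    · have : Function.support gpdf = Set.univ := by
        ext x; simp [Function.support, (gpdf_pos x).ne']
      rw [this]
      simpa [Real.volume_Ioc] using hab
    · filter_upwards with x using (gpdf_pos x).le
    · exact gpdf_integrable.integrableOn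
  linarith

lemma cdf_pos (x : ℝ) : 0 < stdGaussianCDF x := by
  have h := cdf_sub (x-1) x (by linarith)
  have h0 : 0 ≤ stdGaussianCDF (x-1) := by
    rw [cdf_eq]; exact MeasureTheory.setIntegral_nonneg measurableSet_Iic fun t _ => (gpdf_pos t).le
  have := cdf_strictMono (show x - 1 < x by linarith)
  linarith [cdf_strictMono (show x-1 < x by linarith), h0]

lemma cdf_add_Ioi (x : ℝ) : stdGaussianCDF x + ∫ t in Set.Ioi x, gpdf t = 1 := by
  rw [cdf_eq, intervalIntegral.integral_Iic_add_Ioi gpdf_integrable.integrableOn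
    gpdf_integrable.integrableOn, gpdf_integral]

lemma cdf_neg (x : ℝ) : stdGaussianCDF (-x) = 1 - stdGaussianCDF x := by
  have h1 : stdGaussianCDF (-x) = ∫ t in Set.Ioi x, gpdf t := by
    rw [cdf_eq, ← integral_comp_neg_Ioi]
    congr 1 with t
    unfold gpdf; ring_nf
  linarith [cdf_add_Ioi x]

lemma cdf_lt_one (x : ℝ) : stdGaussianCDF x < 1 := by
  have := cdf_pos (-x); rw [cdf_neg] at this; linarith

lemma cdf_zero : stdGaussianCDF 0 = 1/2 := by
  have := cdf_neg 0; rw [neg_zero] at this; linarith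

lemma cdf_tendsto_atTop : Filter.Tendsto stdGaussianCDF Filter.atTop (nhds 1) := by
  have hcov : MeasureTheory.AECover (volume : MeasureTheory.Measure ℝ) Filter.atTop
      (fun i : ℝ => Set.Iic i) := MeasureTheory.aecover_Iic Filter.tendsto_id
  have := hcov.integral_tendsto_of_countably_generated gpdf_integrable
  rw [gpdf_integral] at this
  exact this

lemma cdf_hasDerivAt (x : ℝ) : HasDerivAt stdGaussianCDF (gpdf x) x := by
  have key : ∀ y : ℝ, stdGaussianCDF y = stdGaussianCDF 0 + ∫ t in (0:ℝ)..y, gpdf t := by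
    intro y
    rw [← intervalIntegral.integral_Iic_sub_Iic gpdf_integrable.integrableOn
      gpdf_integrable.integrableOn, cdf_eq, cdf_eq]
    ring
  have hd : HasDerivAt (fun y => stdGaussianCDF 0 + ∫ t in (0:ℝ)..y, gpdf t) (gpdf x) x := by
    refine HasDerivAt.const_add _ ?_
    exact intervalIntegral.integral_hasDerivAt_right
      (gpdf_cont.intervalIntegrable 0 x)
      (gpdf_cont.stronglyMeasurable.stronglyMeasurableAtFilter)
      gpdf_cont.continuousAt
  have : stdGaussianCDF = fun y => stdGaussianCDF 0 + ∫ t in (0:ℝ)..y, gpdf t := funext key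
  rw [this]
  exact hd

lemma cdf_continuous : Continuous stdGaussianCDF :=
  continuous_iff_continuousAt.2 fun x => (cdf_hasDerivAt x).continuousAt

lemma cdf_surjOn : ∀ p ∈ Set.Ioo (0:ℝ) 1, ∃ x, stdGaussianCDF x = p := by
  rintro p ⟨hp0, hp1⟩
  obtain ⟨b, hb⟩ : ∃ b, p < stdGaussianCDF b := by
    rcases (tendsto_order.1 cdf_tendsto_atTop).1 p hp1 |>.exists with ⟨b, hb⟩
    exact ⟨b, hb⟩
  obtain ⟨a, ha⟩ : ∃ a, stdGaussianCDF a < p := by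
    rcases (tendsto_order.1 cdf_tendsto_atTop).1 (1 - p) (by linarith) |>.exists with ⟨c, hc⟩
    refine ⟨-c, ?_⟩
    rw [cdf_neg]; linarith
  have hab : a ≤ b := by
    by_contra h
    push_neg at h
    exact absurd (cdf_strictMono h) (by linarith)
  obtain ⟨x, _, hx⟩ := intermediate_value_Icc hab (cdf_continuous.continuousOn) ⟨ha.le, hb.le⟩
  exact ⟨x, hx⟩

/-- The standard normal quantile function `Φ⁻¹`. -/
noncomputable def stdGaussianQuantile : ℝ → ℝ :=
  Function.invFun stdGaussianCDF


lemma cdf_quantile {p : ℝ} (hp : p ∈ Set.Ioo (0:ℝ) 1) :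
    stdGaussianCDF (stdGaussianQuantile p) = p :=
  Function.invFun_eq (cdf_surjOn p hp)

lemma cdf_shift (m s : ℝ) : stdGaussianCDF (s - m) = ∫ u in Set.Iic s, gpdf (u - m) := by
  have hmp : MeasureTheory.MeasurePreserving (fun x : ℝ => x - m) volume volume :=
    MeasureTheory.measurePreserving_sub_right volume m
  have hemb : MeasurableEmbedding (fun x : ℝ => x - m) :=
    (Homeomorph.subRight m).isClosedEmbedding.measurableEmbedding
  have := hmp.setIntegral_preimage_emb hemb gpdf (Set.Iic (s - m))
  have hpre : (fun x : ℝ => x - m) ⁻¹' Set.Iic (s - m) = Set.Iic s := by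
    ext u; simp [sub_le_sub_iff_right]
  rw [hpre] at this
  rw [cdf_eq, ← this]

lemma gpdf_integrable_shift (m : ℝ) : MeasureTheory.Integrable (fun u : ℝ => gpdf (u - m)) :=
  gpdf_integrable.comp_sub_right m

lemma key_num_nonneg (m : ℝ) (hm : 0 ≤ m) (s : ℝ) :
    gpdf s * stdGaussianCDF (s - m) ≤ gpdf (s - m) * stdGaussianCDF s := by
  rw [cdf_shift, cdf_eq, ← MeasureTheory.integral_const_mul, ← MeasureTheory.integral_const_mul]
  apply MeasureTheory.setIntegral_mono_on
  · exact ((gpdf_integrable_shift m).const_mul _).integrableOn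
  · exact (gpdf_integrable.const_mul _).integrableOn
  · exact measurableSet_Iic
  · intro u hu
    simp only [Set.mem_Iic] at hu
    unfold gpdf
    rw [div_mul_div_comm, div_mul_div_comm, ← Real.exp_add, ← Real.exp_add,
      div_le_div_iff_of_pos_right (by positivity)]
    apply Real.exp_le_exp.2
    nlinarith [mul_le_mul_of_nonneg_right hu hm]

lemma ratio_mono (m : ℝ) (hm : 0 ≤ m) :
    Monotone (fun s => stdGaussianCDF (s - m) / stdGaussianCDF s) := by
  have hd : ∀ x : ℝ, HasDerivAt (fun s => stdGaussianCDF (s - m) / stdGaussianCDF s)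
      ((gpdf (x - m) * stdGaussianCDF x - stdGaussianCDF (x - m) * gpdf x) /
        (stdGaussianCDF x) ^ 2) x := by
    intro x
    have h1 : HasDerivAt (fun s : ℝ => stdGaussianCDF (s - m)) (gpdf (x - m)) x := by
      have := (cdf_hasDerivAt (x - m)).comp x ((hasDerivAt_id x).sub_const m)
      simpa [Function.comp_def] using this
    exact h1.div (cdf_hasDerivAt x) (cdf_pos x).ne'
  apply monotone_of_deriv_nonneg
  · exact fun x => (hd x).differentiableAt
  · intro x
    rw [(hd x).deriv]
    apply div_nonneg _ (sq_nonneg _)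
    have := key_num_nonneg m hm x
    linarith

lemma key_ineq {m s t : ℝ} (hm : 0 ≤ m) (hst : s ≤ t) :
    stdGaussianCDF (s - m) * stdGaussianCDF t ≤ stdGaussianCDF (t - m) * stdGaussianCDF s := by
  have := ratio_mono m hm hst
  rwa [div_le_div_iff₀ (cdf_pos s) (cdf_pos t)] at this

/-- The Gaussian trade-off curve `f_μ`, with `f_μ(α) = Φ(Φ⁻¹(1-α) - μ)` on `(0,1)`,
`f_μ(0) = 1` and `f_μ(1) = 0`. -/
noncomputable def gdpCurve (μ α : ℝ) : ℝ :=
  if α ≤ 0 then 1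
  else if 1 ≤ α then 0
  else stdGaussianCDF (stdGaussianQuantile (1 - α) - μ)

/-- For every `ε ≥ 0`, with `μ = -2 Φ⁻¹(1/(e^ε + 1))`, the pure-DP trade-off curve
`f_{ε,0}` pointwise dominates the Gaussian trade-off curve `f_μ` on `[0,1]`. -/

theorem gdpCurve_le_pureDP_curve (ε : ℝ) (hε : 0 ≤ ε) (α : ℝ)
    (hα : α ∈ Set.Icc (0:ℝ) 1) :
    gdpCurve (-2 * stdGaussianQuantile (1 / (Real.exp ε + 1))) α ≤
      max 0 (max (1 - Real.exp ε * α) (Real.exp (-ε) * (1 - α))) := by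
  obtain ⟨hα0, hα1⟩ := hα
  have hE1 : 1 ≤ Real.exp ε := by
    calc (1:ℝ) = Real.exp 0 := Real.exp_zero.symm
    _ ≤ _ := Real.exp_le_exp.2 hε
  set E := Real.exp ε with hE
  set p := 1 / (E + 1) with hp
  have hppos : 0 < p := by positivity
  have hpmem : p ∈ Set.Ioo (0:ℝ) 1 := ⟨hppos, by rw [hp, div_lt_one (by linarith)]; linarith⟩
  set q := stdGaussianQuantile p with hq
  have hΦq : stdGaussianCDF q = p := cdf_quantile hpmem
  have hphalf : p ≤ 1/2 := by
    rw [hp, div_le_div_iff₀ (by linarith) (by norm_num)]; linarith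
  have hq0 : q ≤ 0 := by
    by_contra h
    push_neg at h
    have := cdf_strictMono h
    rw [cdf_zero, hΦq] at this
    linarith
  have hm0 : (0:ℝ) ≤ -2 * q := by linarith
  have hΦnq : stdGaussianCDF (-q) = 1 - p := by rw [cdf_neg, hΦq]
  have h1p : 1 - p = E * p := by rw [hp]; field_simp; ring
  unfold gdpCurve
  split_ifs with h1 h2
  · have hα' : α = 0 := le_antisymm h1 hα0
    subst hα'
    refine le_trans ?_ (le_max_of_le_right (le_max_left _ _))
    simp
  · exact le_max_left _ _
  · push_neg at h1 h2
    set t := stdGaussianQuantile (1 - α) with ht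
    have hΦt : stdGaussianCDF t = 1 - α := cdf_quantile ⟨by linarith, by linarith⟩
    have hΦnt : stdGaussianCDF (-t) = α := by rw [cdf_neg, hΦt]; ring
    rcases le_or_gt t (-q) with hcase | hcase
    · have hk := key_ineq hm0 hcase
      rw [show -q - (-2 * q) = q by ring, hΦq, hΦnq, hΦt, h1p] at hk
      refine le_trans ?_ (le_max_of_le_right (le_max_right _ _))
      rw [Real.exp_neg, ← hE]
      rw [inv_mul_eq_div, le_div_iff₀ (by linarith)]
      calc stdGaussianCDF (t - -2 * q) * E
          = (stdGaussianCDF (t - -2 * q) * (E * p)) / p := by field_simp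
        _ ≤ (p * (1 - α)) / p := by gcongr
        _ = 1 - α := by field_simp
    · have hs : -2 * q - t ≤ -q := by linarith
      have hk := key_ineq hm0 hs
      rw [show -2 * q - t - (-2 * q) = -t by ring, show -q - (-2 * q) = q by ring,
        hΦnt, hΦq, hΦnq] at hk
      have hmt : stdGaussianCDF (-2 * q - t) = 1 - stdGaussianCDF (t - -2 * q) := by
        rw [show -2 * q - t = -(t - -2 * q) by ring, cdf_neg]
      rw [hmt, h1p] at hk
      refine le_trans ?_ (le_max_of_le_right (le_max_left _ _))
      nlinarith
end

section
/- For every ε ≥ 0, the advantage of the pure ε-DP trade-off curve equals the total variation of the randomized response mechanism: sup_{α ∈ [0,1]} (1 − α − f_{ε,0}(α)) = (e^ε − 1)/(e^ε + 1), and the supremum is attained at α = 1/(e^ε + 1). -/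
/-- The `(ε, δ)`-DP trade-off curve
`f_{ε,δ}(α) = max {0, 1 - δ - e^ε·α, e^{-ε}(1 - δ - α)}`. -/
noncomputable def adpCurve (ε δ α : ℝ) : ℝ :=
  max 0 (max (1 - δ - Real.exp ε * α) (Real.exp (-ε) * (1 - δ - α)))

lemma adpCurve_at_opt (ε : ℝ) (hε : 0 ≤ ε) :
    1 - 1 / (Real.exp ε + 1) - adpCurve ε 0 (1 / (Real.exp ε + 1)) =
      (Real.exp ε - 1) / (Real.exp ε + 1) := by
  have hE : (0:ℝ) < Real.exp ε := Real.exp_pos ε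
  have hE1 : (0:ℝ) < Real.exp ε + 1 := by linarith
  have hinv : Real.exp (-ε) = (Real.exp ε)⁻¹ := Real.exp_neg ε
  have ha : 1 - 0 - Real.exp ε * (1 / (Real.exp ε + 1)) = 1 / (Real.exp ε + 1) := by
    field_simp; ring
  have hb : Real.exp (-ε) * (1 - 0 - 1 / (Real.exp ε + 1)) = 1 / (Real.exp ε + 1) := by
    rw [hinv]; field_simp; ring
  unfold adpCurve
  rw [ha, hb, max_self, max_eq_right (by positivity)]
  field_simp; ring

/-- For every `ε ≥ 0`, the advantage of the pure `ε`-DP trade-off curve equals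
`(e^ε - 1)/(e^ε + 1)`, and the supremum is attained at `α = 1/(e^ε + 1)`. -/
theorem adv_pureDP_eq (ε : ℝ) (hε : 0 ≤ ε) :
    sSup ((fun α => 1 - α - adpCurve ε 0 α) '' Set.Icc (0:ℝ) 1) =
      (Real.exp ε - 1) / (Real.exp ε + 1) ∧
    1 - 1 / (Real.exp ε + 1) - adpCurve ε 0 (1 / (Real.exp ε + 1)) =
      (Real.exp ε - 1) / (Real.exp ε + 1) := by
  have hE : (0:ℝ) < Real.exp ε := Real.exp_pos ε
  have hE1 : 1 ≤ Real.exp ε := Real.one_le_exp hε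
  have hE2 : (0:ℝ) < Real.exp ε + 1 := by linarith
  have hopt := adpCurve_at_opt ε hε
  refine ⟨?_, hopt⟩
  apply IsGreatest.csSup_eq
  constructor
  · exact ⟨1 / (Real.exp ε + 1), ⟨by positivity, by
      rw [div_le_one hE2]; linarith⟩, hopt⟩
  · rintro y ⟨α, ⟨h0, h1⟩, rfl⟩
    have hinv : Real.exp (-ε) = (Real.exp ε)⁻¹ := Real.exp_neg ε
    simp only
    unfold adpCurve
    rw [hinv]
    set E := Real.exp ε with hEdef
    rcases le_or_gt α (1 / (E + 1)) with hc | hc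
    · have hf : 1 - 0 - E * α ≤ max 0 (max (1 - 0 - E * α) (E⁻¹ * (1 - 0 - α))) :=
        le_max_of_le_right (le_max_left _ _)
      have : 1 - α - (1 - 0 - E * α) ≤ (E - 1) / (E + 1) := by
        rw [le_div_iff₀ hE2]
        have hα : α * (E + 1) ≤ 1 := (le_div_iff₀ hE2).mp hc
        nlinarith [mul_nonneg (sub_nonneg.mpr hE1) (sub_nonneg.mpr hα)]
      linarith
    · have hf : E⁻¹ * (1 - 0 - α) ≤ max 0 (max (1 - 0 - E * α) (E⁻¹ * (1 - 0 - α))) :=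
        le_max_of_le_right (le_max_right _ _)
      have key : 1 - α - E⁻¹ * (1 - 0 - α) ≤ (E - 1) / (E + 1) := by
        rw [le_div_iff₀ hE2]
        have hEi : E⁻¹ * E = 1 := inv_mul_cancel₀ hE.ne'
        have hα : 1 ≤ α * (E + 1) := (div_le_iff₀ hE2).mp hc.le
        have hu : E⁻¹ ≤ E := le_trans (inv_le_one_of_one_le₀ hE1) hE1
        nlinarith [mul_nonneg (sub_nonneg.mpr hu) (sub_nonneg.mpr hα), hEi]
      linarith
end

section
/- For every μ ≥ 0, the Gaussian trade-off curve f_μ is a valid trade-off curve: the function α ↦ Φ(Φ⁻¹(1−α) − μ) is convex and non-increasing on (0,1), and satisfies f_μ(α) ≤ 1 − α for all α ∈ (0,1). -/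
namespace GdpAux

open Set MeasureTheory Real Filter

/-- The standard normal density. -/
noncomputable def phi (t : ℝ) : ℝ := Real.exp (-(t ^ 2) / 2) / Real.sqrt (2 * Real.pi)

lemma sqrt_pos' : 0 < Real.sqrt (2 * Real.pi) :=
  Real.sqrt_pos.2 (by positivity)

lemma phi_pos (t : ℝ) : 0 < phi t :=
  div_pos (Real.exp_pos _) sqrt_pos'

lemma phi_cont : Continuous phi := by
  unfold phi
  fun_prop

lemma phi_integrable : Integrable phi := by
  have h : Integrable (fun x : ℝ => Real.exp (-(1/2) * x ^ 2)) :=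
    integrable_exp_neg_mul_sq (by norm_num)
  have := h.div_const (Real.sqrt (2 * Real.pi))
  refine this.congr (Filter.Eventually.of_forall fun x => ?_)
  unfold phi
  ring_nf

lemma phi_integral : ∫ t, phi t = 1 := by
  unfold phi
  have h : ∀ t : ℝ, Real.exp (-(t ^ 2) / 2) / Real.sqrt (2 * Real.pi)
      = Real.exp (-(1/2) * t ^ 2) / Real.sqrt (2 * Real.pi) := by
    intro t; ring_nf
  simp_rw [h]
  rw [MeasureTheory.integral_div, integral_gaussian]
  rw [show Real.pi / (1/2) = 2 * Real.pi by ring]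
  exact div_self sqrt_pos'.ne'

lemma Phi_eq (x : ℝ) : stdGaussianCDF x = ∫ t in Set.Iic x, phi t := rfl

lemma Phi_sub (x y : ℝ) (h : x ≤ y) :
    stdGaussianCDF y - stdGaussianCDF x = ∫ t in Set.Ioc x y, phi t := by
  rw [Phi_eq, Phi_eq]
  rw [← Set.Iic_union_Ioc_eq_Iic h,
    MeasureTheory.setIntegral_union (Set.Iic_disjoint_Ioc le_rfl) measurableSet_Ioc
      phi_integrable.integrableOn phi_integrable.integrableOn]
  ring

lemma Ioc_integral_pos {x y : ℝ} (h : x < y) : 0 < ∫ t in Set.Ioc x y, phi t := by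
  rw [MeasureTheory.setIntegral_pos_iff_support_of_nonneg_ae
    (Filter.Eventually.of_forall fun t => (phi_pos t).le) phi_integrable.integrableOn]
  have : Function.support phi = Set.univ := by
    ext t; simp [Function.mem_support, (phi_pos t).ne']
  rw [this, Set.univ_inter, Real.volume_Ioc]
  simp [h]

lemma Phi_strictMono : StrictMono stdGaussianCDF := by
  intro x y h
  have := Ioc_integral_pos h
  have hs := Phi_sub x y h.le
  linarith

lemma Phi_pos (x : ℝ) : 0 < stdGaussianCDF x := by
  have h1 : 0 ≤ stdGaussianCDF (x - 1) := by
    rw [Phi_eq]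
    exact MeasureTheory.integral_nonneg fun t => (phi_pos t).le
  have h2 := Phi_sub (x - 1) x (by linarith)
  have h3 := Ioc_integral_pos (show x - 1 < x by linarith)
  linarith

lemma Phi_lt_one (x : ℝ) : stdGaussianCDF x < 1 := by
  have hcompl : stdGaussianCDF x + ∫ t in Set.Ioi x, phi t = 1 := by
    rw [Phi_eq, ← phi_integral]
    rw [← MeasureTheory.integral_add_compl measurableSet_Iic phi_integrable]
    congr 1
    rw [Set.compl_Iic]
  have hIoi : 0 < ∫ t in Set.Ioi x, phi t := by
    rw [MeasureTheory.setIntegral_pos_iff_support_of_nonneg_ae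
      (Filter.Eventually.of_forall fun t => (phi_pos t).le) phi_integrable.integrableOn]
    have : Function.support phi = Set.univ := by
      ext t; simp [Function.mem_support, (phi_pos t).ne']
    rw [this, Set.univ_inter]
    simp
  linarith

lemma Phi_mem (x : ℝ) : stdGaussianCDF x ∈ Set.Ioo (0:ℝ) 1 := ⟨Phi_pos x, Phi_lt_one x⟩

lemma Phi_tendsto_atTop : Tendsto (fun n : ℕ => stdGaussianCDF n) atTop (nhds 1) := by
  have h := MeasureTheory.tendsto_setIntegral_of_monotone
    (s := fun n : ℕ => Set.Iic (n : ℝ)) (f := phi) (μ := volume)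
    (fun n => measurableSet_Iic)
    (fun a b hab => Set.Iic_subset_Iic.2 (by exact_mod_cast hab))
    (phi_integrable.integrableOn)
  have hU : ⋃ n : ℕ, Set.Iic ((n : ℝ)) = Set.univ := by
    ext x
    simp only [Set.mem_iUnion, Set.mem_Iic, Set.mem_univ, iff_true]
    exact ⟨⌈x⌉₊, Nat.le_ceil x⟩
  rw [hU] at h
  simpa [Phi_eq, MeasureTheory.setIntegral_univ, phi_integral] using h

lemma Phi_tendsto_atBot : Tendsto (fun n : ℕ => stdGaussianCDF (-(n : ℝ))) atTop (nhds 0) := by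
  have h := MeasureTheory.tendsto_setIntegral_of_antitone
    (s := fun n : ℕ => Set.Iic (-(n : ℝ))) (f := phi) (μ := volume)
    (fun n => measurableSet_Iic)
    (fun a b hab => Set.Iic_subset_Iic.2 (by exact_mod_cast neg_le_neg (Nat.cast_le.2 hab)))
    ⟨0, phi_integrable.integrableOn⟩
  have hI : ⋂ n : ℕ, Set.Iic (-(n : ℝ)) = ∅ := by
    ext x
    simp only [Set.mem_iInter, Set.mem_Iic, Set.mem_empty_iff_false, iff_false, not_forall, not_le]
    obtain ⟨n, hn⟩ := exists_nat_gt (-x)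
    exact ⟨n, by linarith⟩
  rw [hI] at h
  simpa [Phi_eq] using h

lemma hasDerivAt_Phi (x : ℝ) : HasDerivAt stdGaussianCDF (phi x) x := by
  have hfun : stdGaussianCDF = fun u => stdGaussianCDF 0 + ∫ t in (0:ℝ)..u, phi t := by
    funext u
    have h := intervalIntegral.integral_Iic_sub_Iic (μ := volume) (f := phi) (a := (0:ℝ))
      (b := u) phi_integrable.integrableOn phi_integrable.integrableOn
    rw [← Phi_eq, ← Phi_eq] at h
    linarith
  rw [hfun]
  refine HasDerivAt.const_add _ ?_
  exact intervalIntegral.integral_hasDerivAt_right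
    phi_integrable.intervalIntegrable
    (phi_cont.stronglyMeasurableAtFilter _ _)
    phi_cont.continuousAt

lemma Phi_continuous : Continuous stdGaussianCDF :=
  continuous_iff_continuousAt.2 fun x => (hasDerivAt_Phi x).continuousAt

lemma Phi_surjOn : ∀ y ∈ Set.Ioo (0:ℝ) 1, ∃ x, stdGaussianCDF x = y := by
  intro y hy
  obtain ⟨n, hn⟩ := (Phi_tendsto_atTop.eventually (eventually_gt_nhds hy.2)).exists
  obtain ⟨m, hm⟩ := (Phi_tendsto_atBot.eventually (eventually_lt_nhds hy.1)).exists
  set k : ℕ := max n m with hk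
  set a : ℝ := -(k : ℝ) with ha
  set b : ℝ := (k : ℝ) with hb
  have hab : a ≤ b := by
    have : (0:ℝ) ≤ (k : ℝ) := Nat.cast_nonneg _
    rw [ha, hb]; linarith
  have hya : stdGaussianCDF a < y :=
    lt_of_le_of_lt (Phi_strictMono.monotone (by
      rw [ha]
      exact neg_le_neg (Nat.cast_le.2 (le_max_right n m)))) hm
  have hyb : y < stdGaussianCDF b :=
    lt_of_lt_of_le hn (Phi_strictMono.monotone (Nat.cast_le.2 (le_max_left n m)))
  have := intermediate_value_Icc hab (Phi_continuous.continuousOn)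
  obtain ⟨x, _, hx⟩ := this ⟨hya.le, hyb.le⟩
  exact ⟨x, hx⟩

lemma q_right_inv : ∀ y ∈ Set.Ioo (0:ℝ) 1, stdGaussianCDF (stdGaussianQuantile y) = y := by
  intro y hy
  exact Function.invFun_eq (Phi_surjOn y hy)

lemma q_left_inv (x : ℝ) : stdGaussianQuantile (stdGaussianCDF x) = x :=
  Function.leftInverse_invFun Phi_strictMono.injective x

lemma q_strictMonoOn : StrictMonoOn stdGaussianQuantile (Set.Ioo (0:ℝ) 1) := by
  intro y hy z hz hyz
  by_contra h
  push_neg at h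
  have := Phi_strictMono.monotone h
  rw [q_right_inv y hy, q_right_inv z hz] at this
  exact absurd this (not_le.2 hyz)

lemma q_image : stdGaussianQuantile '' Set.Ioo (0:ℝ) 1 = Set.univ := by
  ext x
  simp only [Set.mem_image, Set.mem_univ, iff_true]
  exact ⟨stdGaussianCDF x, Phi_mem x, q_left_inv x⟩

lemma q_continuousAt {y : ℝ} (hy : y ∈ Set.Ioo (0:ℝ) 1) :
    ContinuousAt stdGaussianQuantile y := by
  refine q_strictMonoOn.continuousAt_of_image_mem_nhds
    (isOpen_Ioo.mem_nhds hy) ?_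
  rw [q_image]
  exact Filter.univ_mem

lemma hasDerivAt_q {y : ℝ} (hy : y ∈ Set.Ioo (0:ℝ) 1) :
    HasDerivAt stdGaussianQuantile (phi (stdGaussianQuantile y))⁻¹ y := by
  refine HasDerivAt.of_local_left_inverse (q_continuousAt hy)
    (hasDerivAt_Phi _) (phi_pos _).ne' ?_
  filter_upwards [isOpen_Ioo.mem_nhds hy] with z hz
  exact q_right_inv z hz

lemma phi_ratio (x : ℝ) (μ : ℝ) :
    phi (x - μ) / phi x = Real.exp (μ * x - μ ^ 2 / 2) := by
  unfold phi
  have h1 : Real.exp (-(x - μ) ^ 2 / 2) / Real.sqrt (2 * Real.pi)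
      / (Real.exp (-x ^ 2 / 2) / Real.sqrt (2 * Real.pi))
      = Real.exp (-(x - μ) ^ 2 / 2) / Real.exp (-x ^ 2 / 2) := by
    rw [div_div_div_eq]
    rw [mul_comm (Real.exp (-(x - μ) ^ 2 / 2)) (Real.sqrt (2 * Real.pi))]
    exact mul_div_mul_left _ _ sqrt_pos'.ne'
  rw [h1, ← Real.exp_sub]
  congr 1
  ring

lemma hasDerivAt_f (μ : ℝ) {α : ℝ} (hα : α ∈ Set.Ioo (0:ℝ) 1) :
    HasDerivAt (fun α => stdGaussianCDF (stdGaussianQuantile (1 - α) - μ))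
      (-Real.exp (μ * stdGaussianQuantile (1 - α) - μ ^ 2 / 2)) α := by
  have h1α : 1 - α ∈ Set.Ioo (0:ℝ) 1 := ⟨by linarith [hα.2], by linarith [hα.1]⟩
  have hsub : HasDerivAt (fun α : ℝ => 1 - α) (-1) α := by
    simpa using (hasDerivAt_id α).const_sub 1
  have hq : HasDerivAt (fun α : ℝ => stdGaussianQuantile (1 - α))
      ((phi (stdGaussianQuantile (1 - α)))⁻¹ * (-1)) α :=
    (hasDerivAt_q h1α).comp α hsub
  have hqμ : HasDerivAt (fun α : ℝ => stdGaussianQuantile (1 - α) - μ)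
      ((phi (stdGaussianQuantile (1 - α)))⁻¹ * (-1)) α := hq.sub_const μ
  have := (hasDerivAt_Phi (stdGaussianQuantile (1 - α) - μ)).comp α hqμ
  convert this using 1
  case e'_4 => rfl
  case e'_5 => rfl
  case e'_8 => rfl
  rw [← phi_ratio (stdGaussianQuantile (1 - α)) μ]
  field_simp

end GdpAux

/-- For every `μ ≥ 0`, the Gaussian trade-off curve
`α ↦ Φ(Φ⁻¹(1-α) - μ)` is convex and non-increasing on `(0,1)`, and satisfies
`f_μ(α) ≤ 1 - α` for all `α ∈ (0,1)`. -/
theorem gdpCurve_is_valid_tradeoff (μ : ℝ) (hμ : 0 ≤ μ) :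
    ConvexOn ℝ (Set.Ioo (0:ℝ) 1)
      (fun α => stdGaussianCDF (stdGaussianQuantile (1 - α) - μ)) ∧
    AntitoneOn (fun α => stdGaussianCDF (stdGaussianQuantile (1 - α) - μ))
      (Set.Ioo (0:ℝ) 1) ∧
    ∀ α ∈ Set.Ioo (0:ℝ) 1,
      stdGaussianCDF (stdGaussianQuantile (1 - α) - μ) ≤ 1 - α := by
  have hq_le : ∀ {α β : ℝ}, α ∈ Set.Ioo (0:ℝ) 1 → β ∈ Set.Ioo (0:ℝ) 1 → α ≤ β →
      stdGaussianQuantile (1 - β) ≤ stdGaussianQuantile (1 - α) := by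
    intro α β hα hβ hab
    rcases eq_or_lt_of_le hab with rfl | h
    · exact le_rfl
    · exact (GdpAux.q_strictMonoOn ⟨by linarith [hβ.2], by linarith [hβ.1]⟩
        ⟨by linarith [hα.2], by linarith [hα.1]⟩ (by linarith)).le
  refine ⟨?_, ?_, ?_⟩
  · refine MonotoneOn.convexOn_of_deriv (convex_Ioo 0 1) ?_ ?_ ?_
    · exact fun α hα => ((GdpAux.hasDerivAt_f μ hα).continuousAt).continuousWithinAt
    · rw [interior_Ioo]
      exact fun α hα => (GdpAux.hasDerivAt_f μ hα).differentiableAt.differentiableWithinAt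
    · rw [interior_Ioo]
      intro a ha b hb hab
      rw [(GdpAux.hasDerivAt_f μ ha).deriv, (GdpAux.hasDerivAt_f μ hb).deriv]
      have h1 : μ * stdGaussianQuantile (1 - b) ≤ μ * stdGaussianQuantile (1 - a) :=
        mul_le_mul_of_nonneg_left (hq_le ha hb hab) hμ
      have := Real.exp_le_exp.2 (show μ * stdGaussianQuantile (1 - b) - μ ^ 2 / 2
        ≤ μ * stdGaussianQuantile (1 - a) - μ ^ 2 / 2 by linarith)
      linarith
  · intro α hα β hβ hαβ
    exact GdpAux.Phi_strictMono.monotone (by linarith [hq_le hα hβ hαβ])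
  · intro α hα
    have h1α : 1 - α ∈ Set.Ioo (0:ℝ) 1 := ⟨by linarith [hα.2], by linarith [hα.1]⟩
    calc stdGaussianCDF (stdGaussianQuantile (1 - α) - μ)
        ≤ stdGaussianCDF (stdGaussianQuantile (1 - α)) :=
          GdpAux.Phi_strictMono.monotone (by linarith)
      _ = 1 - α := GdpAux.q_right_inv _ h1α
end

section
/- Let P and Q be probability measures on a measurable space Ω with H_{e^ε}(P‖Q) ≤ δ and H_{e^ε}(Q‖P) ≤ δ for some ε ∈ ℝ and δ ∈ [0,1]. Then for every test φ : Ω → [0,1], writing α = ∫ φ dP, one has 1 − ∫ φ dQ ≥ max{0, 1 − δ − e^ε·α, e^{−ε}(1 − δ − α)}; that is, an (ε, δ)-DP pair has trade-off curve at least f_{ε,δ}. -/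
open MeasureTheory

/-- The hockey-stick divergence `H_γ(P‖Q) = sup_E (Q(E) - γ·P(E))`. -/
noncomputable def hockeyStick {Ω : Type*} [MeasurableSpace Ω]
    (γ : ℝ) (P Q : Measure Ω) : ℝ :=
  sSup {x : ℝ | ∃ E : Set Ω, MeasurableSet E ∧ x = (Q E).toReal - γ * (P E).toReal}

section Aux

variable {Ω : Type*} [MeasurableSpace Ω]

lemma aux_integrable (μ : Measure Ω) [IsProbabilityMeasure μ]
    (φ : Ω → ℝ) (hφ : Measurable φ) (hφ01 : ∀ x, φ x ∈ Set.Icc (0:ℝ) 1) :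
    Integrable φ μ := by
  refine (integrable_const (1:ℝ)).mono' hφ.aestronglyMeasurable ?_
  refine Filter.Eventually.of_forall fun x => ?_
  have := hφ01 x
  rw [Real.norm_eq_abs, abs_le]
  constructor <;> linarith [this.1, this.2]

lemma aux_intOn (μ : Measure Ω) [IsProbabilityMeasure μ]
    (φ : Ω → ℝ) (hφ : Measurable φ) :
    IntegrableOn (fun t : ℝ => (μ {a | t ≤ φ a}).toReal) (Set.Ioc 0 1) := by
  have hanti : Antitone (fun t : ℝ => (μ {a | t ≤ φ a}).toReal) := by
    intro s t hst
    apply ENNReal.toReal_mono (measure_ne_top μ _)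
    exact measure_mono (fun a ha => le_trans hst ha)
  have hbase : IntegrableOn (fun _ : ℝ => (1:ℝ)) (Set.Ioc 0 1) volume :=
    integrableOn_const (by simp)
  refine hbase.mono' (hanti.measurable.aestronglyMeasurable) ?_
  refine Filter.Eventually.of_forall fun t => ?_
  rw [Real.norm_eq_abs, abs_of_nonneg ENNReal.toReal_nonneg]
  exact ENNReal.toReal_le_of_le_ofReal zero_le_one (by simpa using prob_le_one)

/-- Key lemma: the hockey-stick bound on sets extends to tests via layer cake. -/
lemma key_lemma (P Q : Measure Ω) [IsProbabilityMeasure P] [IsProbabilityMeasure Q]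
    (γ δ : ℝ)
    (h : ∀ E : Set Ω, MeasurableSet E → (Q E).toReal - γ * (P E).toReal ≤ δ)
    (φ : Ω → ℝ) (hφ : Measurable φ) (hφ01 : ∀ x, φ x ∈ Set.Icc (0:ℝ) 1) :
    ∫ x, φ x ∂Q - γ * ∫ x, φ x ∂P ≤ δ := by
  have hφQ := aux_integrable Q φ hφ hφ01
  have hφP := aux_integrable P φ hφ hφ01
  have hnnQ : 0 ≤ᵐ[Q] φ := Filter.Eventually.of_forall fun x => (hφ01 x).1
  have hnnP : 0 ≤ᵐ[P] φ := Filter.Eventually.of_forall fun x => (hφ01 x).1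
  have hbdQ : φ ≤ᵐ[Q] fun _ => (1:ℝ) := Filter.Eventually.of_forall fun x => (hφ01 x).2
  have hbdP : φ ≤ᵐ[P] fun _ => (1:ℝ) := Filter.Eventually.of_forall fun x => (hφ01 x).2
  rw [hφQ.integral_eq_integral_Ioc_meas_le hnnQ hbdQ,
      hφP.integral_eq_integral_Ioc_meas_le hnnP hbdP]
  have hQ := aux_intOn Q φ hφ
  have hP := aux_intOn P φ hφ
  simp only [Measure.real]
  rw [← integral_const_mul, ← integral_sub hQ (hP.const_mul γ)]
  calc ∫ t in Set.Ioc (0:ℝ) 1,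
        ((Q {a | t ≤ φ a}).toReal - γ * (P {a | t ≤ φ a}).toReal)
      ≤ ∫ _t in Set.Ioc (0:ℝ) 1, δ := by
        refine setIntegral_mono_on (hQ.sub (hP.const_mul γ)) (integrableOn_const (by simp)) measurableSet_Ioc ?_
        intro t _
        exact h _ (hφ measurableSet_Ici)
    _ = δ := by simp

lemma hs_le {Ω : Type*} [MeasurableSpace Ω] (γ δ : ℝ) (hγ : 0 ≤ γ)
    (P Q : Measure Ω) [IsProbabilityMeasure P] [IsProbabilityMeasure Q]
    (h : hockeyStick γ P Q ≤ δ) :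
    ∀ E : Set Ω, MeasurableSet E → (Q E).toReal - γ * (P E).toReal ≤ δ := by
  intro E hE
  have hbdd : BddAbove {x : ℝ | ∃ E : Set Ω, MeasurableSet E ∧
      x = (Q E).toReal - γ * (P E).toReal} := by
    refine ⟨1, fun x hx => ?_⟩
    obtain ⟨F, hF, rfl⟩ := hx
    have h1 : (Q F).toReal ≤ 1 :=
      ENNReal.toReal_le_of_le_ofReal zero_le_one (by simpa using prob_le_one)
    nlinarith [ENNReal.toReal_nonneg (a := P F)]
  exact le_trans (le_csSup hbdd ⟨E, hE, rfl⟩) h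

end Aux

/-- An `(ε, δ)`-DP pair of probability measures has trade-off curve at least
`f_{ε,δ}`: for every test `φ : Ω → [0,1]` with false positive rate `α = ∫ φ dP`,
the false negative rate `1 - ∫ φ dQ` is at least
`max {0, 1 - δ - e^ε·α, e^{-ε}(1 - δ - α)}`. -/
theorem adp_implies_tradeoff {Ω : Type*} [MeasurableSpace Ω]
    (P Q : Measure Ω) [IsProbabilityMeasure P] [IsProbabilityMeasure Q]
    (ε δ : ℝ) (hδ : δ ∈ Set.Icc (0:ℝ) 1)
    (h1 : hockeyStick (Real.exp ε) P Q ≤ δ)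
    (h2 : hockeyStick (Real.exp ε) Q P ≤ δ)
    (φ : Ω → ℝ) (hφ : Measurable φ) (hφ01 : ∀ x, φ x ∈ Set.Icc (0:ℝ) 1) :
    max 0 (max (1 - δ - Real.exp ε * ∫ x, φ x ∂P)
        (Real.exp (-ε) * (1 - δ - ∫ x, φ x ∂P))) ≤
      1 - ∫ x, φ x ∂Q := by
  have hexp : (0:ℝ) < Real.exp ε := Real.exp_pos ε
  have hφQ := aux_integrable Q φ hφ hφ01
  have hφP := aux_integrable P φ hφ hφ01
  -- bound 0
  have hb0 : ∫ x, φ x ∂Q ≤ 1 := by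
    calc ∫ x, φ x ∂Q ≤ ∫ _x, (1:ℝ) ∂Q :=
          integral_mono hφQ (integrable_const 1) fun x => (hφ01 x).2
      _ = 1 := by simp
  -- bound 1: key_lemma applied to φ with (P,Q)
  have hb1 : ∫ x, φ x ∂Q - Real.exp ε * ∫ x, φ x ∂P ≤ δ :=
    key_lemma P Q _ δ (hs_le _ δ hexp.le P Q h1) φ hφ hφ01
  -- bound 2: key_lemma applied to 1-φ with (Q,P)
  have hψ01 : ∀ x, (fun y => 1 - φ y) x ∈ Set.Icc (0:ℝ) 1 := by
    intro x
    have := hφ01 x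
    simp only [Set.mem_Icc] at this ⊢
    constructor <;> linarith [this.1, this.2]
  have hb2 : ∫ x, (1 - φ x) ∂P - Real.exp ε * ∫ x, (1 - φ x) ∂Q ≤ δ :=
    key_lemma Q P _ δ (hs_le _ δ hexp.le Q P h2) (fun y => 1 - φ y)
      (measurable_const.sub hφ) hψ01
  rw [integral_sub (integrable_const 1) hφP, integral_sub (integrable_const 1) hφQ] at hb2
  simp only [integral_const, Measure.real, measure_univ, ENNReal.toReal_one, one_smul, smul_eq_mul] at hb2
  refine max_le (by linarith) (max_le (by linarith) ?_)
  rw [Real.exp_neg]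
  rw [inv_mul_le_iff₀ hexp]
  nlinarith
end

section
/- Let P and Q be probability measures on a measurable space Ω and let δ : ℝ → [0,1] be a privacy profile such that for every ε ∈ ℝ, H_{e^ε}(P‖Q) ≤ δ(ε) and H_{e^ε}(Q‖P) ≤ δ(ε). Then for every test φ : Ω → [0,1], writing α = ∫ φ dP, one has 1 − ∫ φ dQ ≥ sup_{ε ∈ ℝ} max{0, 1 − δ(ε) − e^ε·α, e^{−ε}(1 − δ(ε) − α)}; i.e., a pair satisfying the whole privacy profile is f-DP with f(α) = sup_{ε} f_{ε,δ(ε)}(α). -/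
open MeasureTheory Set

lemma key_ineq_s16 {Ω : Type*} [MeasurableSpace Ω]
    (μ ν : Measure Ω) [IsProbabilityMeasure μ] [IsProbabilityMeasure ν]
    (γ d : ℝ)
    (hd : ∀ E : Set Ω, MeasurableSet E → (ν E).toReal - γ * (μ E).toReal ≤ d)
    (ψ : Ω → ℝ) (hψ : Measurable ψ) (h01 : ∀ x, ψ x ∈ Set.Icc (0:ℝ) 1) :
    ∫ x, ψ x ∂ν - γ * ∫ x, ψ x ∂μ ≤ d := by
  have hint : ∀ (m : Measure Ω), IsProbabilityMeasure m → Integrable ψ m := by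
    intro m hm
    exact (integrable_const 1).mono' hψ.aestronglyMeasurable
      (Filter.Eventually.of_forall fun x => by
        rw [Real.norm_eq_abs, abs_le]; exact ⟨le_trans (by norm_num) (h01 x).1, (h01 x).2⟩)
  have hν := (hint ν inferInstance).integral_eq_integral_Ioc_meas_le
    (Filter.Eventually.of_forall fun x => (h01 x).1)
    (Filter.Eventually.of_forall fun x => (h01 x).2)
  have hμ := (hint μ inferInstance).integral_eq_integral_Ioc_meas_le
    (Filter.Eventually.of_forall fun x => (h01 x).1)
    (Filter.Eventually.of_forall fun x => (h01 x).2)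
  rw [hν, hμ, ← integral_const_mul]
  simp only [measureReal_def]
  have hmeas : ∀ (m : Measure Ω), Measurable (fun t : ℝ => (m {a | t ≤ ψ a}).toReal) := by
    intro m
    have h : Antitone (fun t : ℝ => m {a | t ≤ ψ a}) :=
      fun s t hst => measure_mono (fun a ha => le_trans hst ha)
    exact h.measurable.ennreal_toReal
  have hintF : ∀ (m : Measure Ω), IsProbabilityMeasure m →
      IntegrableOn (fun t : ℝ => (m {a | t ≤ ψ a}).toReal) (Ioc 0 1) := by
    intro m hm
    have hc : IntegrableOn (fun _ : ℝ => (1:ℝ)) (Ioc 0 1) := integrableOn_const measure_Ioc_lt_top.ne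
    refine hc.mono' ((hmeas m).aestronglyMeasurable) ?_
    refine Filter.Eventually.of_forall fun t => ?_
    rw [Real.norm_eq_abs, abs_of_nonneg ENNReal.toReal_nonneg]
    exact ENNReal.toReal_le_of_le_ofReal zero_le_one (by simpa using prob_le_one)
  rw [← integral_sub (hintF ν inferInstance) (((hintF μ inferInstance).const_mul γ))]
  calc ∫ t in Ioc (0:ℝ) 1, ((ν {a | t ≤ ψ a}).toReal - γ * (μ {a | t ≤ ψ a}).toReal)
      ≤ ∫ _t in Ioc (0:ℝ) 1, d := by
        refine setIntegral_mono_on ?_ (integrableOn_const measure_Ioc_lt_top.ne)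
          measurableSet_Ioc (fun t _ => ?_)
        · exact (hintF ν inferInstance).sub (((hintF μ inferInstance).const_mul γ))
        · exact hd _ (measurableSet_le measurable_const hψ)
    _ = d := by simp


lemma hs_bound {Ω : Type*} [MeasurableSpace Ω] (γ : ℝ) (hγ : 0 ≤ γ)
    (P Q : Measure Ω) [IsProbabilityMeasure P] [IsProbabilityMeasure Q]
    (E : Set Ω) (hE : MeasurableSet E) :
    (Q E).toReal - γ * (P E).toReal ≤ hockeyStick γ P Q := by
  apply le_csSup
  · refine ⟨1, fun x hx => ?_⟩
    obtain ⟨F, hF, rfl⟩ := hx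
    have h1 : (Q F).toReal ≤ 1 := ENNReal.toReal_le_of_le_ofReal zero_le_one (by simpa using prob_le_one)
    nlinarith [ENNReal.toReal_nonneg (a := P F)]
  · exact ⟨E, hE, rfl⟩

/-- The hockey-stick divergence `H_γ(P‖Q) = sup_E (Q(E) - γ·P(E))`. -/
theorem privacy_profile_implies_tradeoff {Ω : Type*} [MeasurableSpace Ω]
    (P Q : Measure Ω) [IsProbabilityMeasure P] [IsProbabilityMeasure Q]
    (dp : ℝ → ℝ) (hdp : ∀ ε, dp ε ∈ Set.Icc (0:ℝ) 1)
    (h1 : ∀ ε : ℝ, hockeyStick (Real.exp ε) P Q ≤ dp ε)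
    (h2 : ∀ ε : ℝ, hockeyStick (Real.exp ε) Q P ≤ dp ε)
    (φ : Ω → ℝ) (hφ : Measurable φ) (hφ01 : ∀ x, φ x ∈ Set.Icc (0:ℝ) 1) :
    (⨆ ε : ℝ, max 0 (max (1 - dp ε - Real.exp ε * ∫ x, φ x ∂P)
        (Real.exp (-ε) * (1 - dp ε - ∫ x, φ x ∂P)))) ≤
      1 - ∫ x, φ x ∂Q := by
  have hintφ : ∀ (m : Measure Ω), IsProbabilityMeasure m → Integrable φ m := by
    intro m hm
    exact (integrable_const 1).mono' hφ.aestronglyMeasurable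
      (Filter.Eventually.of_forall fun x => by
        rw [Real.norm_eq_abs, abs_le]
        exact ⟨le_trans (by norm_num) (hφ01 x).1, (hφ01 x).2⟩)
  have hψ01 : ∀ x, (1 : ℝ) - φ x ∈ Set.Icc (0:ℝ) 1 :=
    fun x => ⟨by linarith [(hφ01 x).2], by linarith [(hφ01 x).1]⟩
  have hQle : ∫ x, φ x ∂Q ≤ 1 := by
    calc ∫ x, φ x ∂Q ≤ ∫ _x, (1:ℝ) ∂Q :=
          integral_mono (hintφ Q inferInstance) (integrable_const 1) (fun x => (hφ01 x).2)
      _ = 1 := by simp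
  apply ciSup_le
  intro ε
  refine max_le (by linarith) (max_le ?_ ?_)
  · -- ∫φdQ - e^ε ∫φdP ≤ dp ε
    have := key_ineq_s16 P Q (Real.exp ε) (dp ε)
      (fun E hE => le_trans (hs_bound _ (Real.exp_nonneg ε) P Q E hE) (h1 ε))
      φ hφ hφ01
    linarith
  · -- e^{-ε}(1 - dp ε - α) ≤ 1 - ∫φdQ
    have key := key_ineq_s16 Q P (Real.exp ε) (dp ε)
      (fun E hE => le_trans (hs_bound _ (Real.exp_nonneg ε) Q P E hE) (h2 ε))
      (fun x => 1 - φ x) (measurable_const.sub hφ) hψ01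
    have eP : ∫ x, (1 - φ x) ∂P = 1 - ∫ x, φ x ∂P := by
      rw [integral_sub (integrable_const 1) (hintφ P inferInstance)]; simp
    have eQ : ∫ x, (1 - φ x) ∂Q = 1 - ∫ x, φ x ∂Q := by
      rw [integral_sub (integrable_const 1) (hintφ Q inferInstance)]; simp
    rw [eP, eQ] at key
    -- key : 1 - ∫φdP - e^ε * (1 - ∫φdQ) ≤ dp ε
    rw [Real.exp_neg]
    rw [inv_mul_le_iff₀ (Real.exp_pos ε)]
    nlinarith [Real.exp_pos ε]
end

section
/- Let P and Q be mutually absolutely continuous probability measures on a measurable space. Then for every ε ∈ ℝ, the hockey-stick divergence admits the privacy-loss representation H_{e^ε}(P‖Q) = ∫ max{0, 1 − e^{ε − L}} dQ, where L = log(dQ/dP) is the log-likelihood ratio; equivalently, H_{e^ε}(P‖Q) = E_{y ∼ Y}[max{0, 1 − e^{ε − y}}] where Y is the privacy loss random variable, i.e., the distribution of L under Q. -/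
open MeasureTheory

/-- For mutually absolutely continuous probability measures `P, Q`, the
hockey-stick divergence admits the privacy-loss representation
`H_{e^ε}(P‖Q) = ∫ max {0, 1 - e^{ε - L}} dQ` where `L = log (dQ/dP)`. -/
theorem hockeyStick_eq_plrv {Ω : Type*} [MeasurableSpace Ω]
    (P Q : Measure Ω) [IsProbabilityMeasure P] [IsProbabilityMeasure Q]
    (hPQ : P ≪ Q) (hQP : Q ≪ P) (ε : ℝ) :
    hockeyStick (Real.exp ε) P Q =
      ∫ x, max 0 (1 - Real.exp (ε - Real.log ((Q.rnDeriv P x).toReal))) ∂Q := by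
  set γ := Real.exp ε with hγdef
  have hγpos : 0 < γ := Real.exp_pos ε
  set f : Ω → ℝ := fun x => (Q.rnDeriv P x).toReal with hfdef
  have hf_meas : Measurable f := (Measure.measurable_rnDeriv Q P).ennreal_toReal
  have hf_int : Integrable f P := Measure.integrable_toReal_rnDeriv
  have hf_nonneg : ∀ x, 0 ≤ f x := fun x => ENNReal.toReal_nonneg
  -- positivity of f a.e.
  have hpos_Q : ∀ᵐ x ∂Q, 0 < f x := by
    have h1 : ∀ᵐ x ∂Q, 0 < Q.rnDeriv P x := Measure.rnDeriv_pos hQP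
    have h2 : ∀ᵐ x ∂Q, Q.rnDeriv P x < ⊤ :=
      (Measure.rnDeriv_lt_top Q P).filter_mono hQP.ae_le
    filter_upwards [h1, h2] with x hx1 hx2
    exact ENNReal.toReal_pos hx1.ne' hx2.ne
  have hpos_P : ∀ᵐ x ∂P, 0 < f x := hpos_Q.filter_mono hPQ.ae_le
  -- the candidate maximizer
  set E : Set Ω := {x | γ < f x} with hEdef
  have hE : MeasurableSet E := measurableSet_lt measurable_const hf_meas
  set M : ℝ := ∫ x, max 0 (f x - γ) ∂P with hMdef
  have hmax_int : Integrable (fun x => max 0 (f x - γ)) P := by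
    have : Integrable (fun x => f x - γ) P := hf_int.sub (integrable_const γ)
    simpa [max_comm] using this.pos_part
  -- integral of (f - γ) over any measurable set F
  have hsub_int : ∀ F : Set Ω, MeasurableSet F →
      ∫ x in F, (f x - γ) ∂P = (Q F).toReal - γ * (P F).toReal := by
    intro F hF
    rw [integral_sub (hf_int.integrableOn) (integrable_const γ).integrableOn,
      Measure.setIntegral_toReal_rnDeriv hQP F, setIntegral_const]
    simp [smul_eq_mul, mul_comm]
    rfl
  -- upper bound
  have hub : ∀ F : Set Ω, MeasurableSet F →
      (Q F).toReal - γ * (P F).toReal ≤ M := by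
    intro F hF
    rw [← hsub_int F hF]
    calc ∫ x in F, (f x - γ) ∂P ≤ ∫ x in F, max 0 (f x - γ) ∂P := by
          apply setIntegral_mono (hf_int.sub (integrable_const γ)).integrableOn
            hmax_int.integrableOn
          intro x; exact le_max_right _ _
      _ ≤ M := by
          apply setIntegral_le_integral hmax_int
          filter_upwards with x using le_max_left _ _
  -- equality at E
  have hME : M = (Q E).toReal - γ * (P E).toReal := by
    rw [← hsub_int E hE, hMdef, ← integral_indicator hE]
    apply integral_congr_ae
    filter_upwards with x
    by_cases hx : x ∈ E
    · rw [Set.indicator_of_mem hx]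
      exact max_eq_right (sub_nonneg.2 (le_of_lt hx))
    · rw [Set.indicator_of_notMem hx]
      exact max_eq_left (sub_nonpos.2 (le_of_not_gt hx))
  -- the RHS equals M
  have hRHS : ∫ x, max 0 (1 - Real.exp (ε - Real.log (f x))) ∂Q = M := by
    rw [← integral_rnDeriv_smul hQP
      (f := fun x => max 0 (1 - Real.exp (ε - Real.log (f x)))), hMdef]
    apply integral_congr_ae
    filter_upwards [hpos_P] with x hx
    have hexp : Real.exp (ε - Real.log (f x)) = γ / f x := by
      rw [Real.exp_sub, Real.exp_log hx, hγdef]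
    rw [hexp, smul_eq_mul, mul_max_of_nonneg _ _ (hf_nonneg x), mul_zero,
      mul_sub, mul_one, mul_div_cancel₀ _ hx.ne']
  rw [hRHS]
  -- conclude via sSup
  apply IsGreatest.csSup_eq
  constructor
  · exact ⟨E, hE, hME⟩
  · rintro x ⟨F, hF, rfl⟩
    exact hub F hF
end

section
/- Let f and g be valid trade-off curves with g(α) ≤ f(α) for all α ∈ [0,1]. For π ∈ [0,1], define the minimal Bayes error R_f(π) = inf_{α ∈ [0,1]} (π·α + (1−π)·f(α)). Then the Δ-divergence equals the worst-case decrease in minimal Bayes error: Δ(f, g) = sup_{π ∈ [0,1]} (R_f(π) − R_g(π)). -/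
/-- The minimal Bayes error `R_f(π) = inf_{α ∈ [0,1]} (π·α + (1-π)·f(α))`. -/
noncomputable def bayesRisk (f : ℝ → ℝ) (π : ℝ) : ℝ :=
  sInf ((fun α => π * α + (1 - π) * f α) '' Set.Icc (0:ℝ) 1)

section Aux

lemma riskSet_nonempty (f : ℝ → ℝ) (π : ℝ) :
    ((fun α => π * α + (1 - π) * f α) '' Set.Icc (0:ℝ) 1).Nonempty :=
  (Set.nonempty_Icc.2 zero_le_one).image _

lemma risk_bddBelow (f : ℝ → ℝ) (hf0 : ∀ α ∈ Set.Icc (0:ℝ) 1, 0 ≤ f α) {π : ℝ}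
    (hπ : π ∈ Set.Icc (0:ℝ) 1) :
    BddBelow ((fun α => π * α + (1 - π) * f α) '' Set.Icc (0:ℝ) 1) := by
  refine ⟨0, ?_⟩
  rintro _ ⟨α, hα, rfl⟩
  have h1 := hf0 α hα
  have h2 := mul_nonneg hπ.1 hα.1
  have h3 := mul_nonneg (by linarith [hπ.2] : (0:ℝ) ≤ 1 - π) h1
  simp only []
  linarith

lemma risk_ge (f : ℝ → ℝ) (π b : ℝ)
    (h : ∀ α ∈ Set.Icc (0:ℝ) 1, b ≤ π * α + (1 - π) * f α) : b ≤ bayesRisk f π := by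
  refine le_csInf (riskSet_nonempty f π) ?_
  rintro _ ⟨α, hα, rfl⟩
  exact h α hα

lemma risk_le (f : ℝ → ℝ) (π : ℝ) (hf0 : ∀ α ∈ Set.Icc (0:ℝ) 1, 0 ≤ f α)
    (hπ : π ∈ Set.Icc (0:ℝ) 1) {α : ℝ} (hα : α ∈ Set.Icc (0:ℝ) 1) :
    bayesRisk f π ≤ π * α + (1 - π) * f α :=
  csInf_le (risk_bddBelow f hf0 hπ) (Set.mem_image_of_mem _ hα)

end Aux

/-- For valid trade-off curves `f, g` with `g ≤ f` on `[0,1]`, the Δ-divergence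
equals the worst-case decrease in minimal Bayes error:
`Δ(f, g) = sup_{π ∈ [0,1]} (R_f(π) - R_g(π))`. -/
theorem deltaDiv_eq_sup_bayesRisk_diff (f g : ℝ → ℝ)
    (hf : IsTradeoff f) (hg : IsTradeoff g)
    (hle : ∀ α ∈ Set.Icc (0:ℝ) 1, g α ≤ f α) :
    deltaDiv f g =
      sSup ((fun π => bayesRisk f π - bayesRisk g π) '' Set.Icc (0:ℝ) 1) := by
  obtain ⟨hfcx, hfc, hfa, hfb, hfz⟩ := hf
  obtain ⟨hgcx, hgc, hga, hgb, hgz⟩ := hg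
  have hf0 : ∀ α ∈ Set.Icc (0:ℝ) 1, 0 ≤ f α := fun α hα => (hfb α hα).1
  have hg0 : ∀ α ∈ Set.Icc (0:ℝ) 1, 0 ≤ g α := fun α hα => (hgb α hα).1
  have hone : (1:ℝ) ∈ Set.Icc (0:ℝ) 1 := Set.mem_Icc.2 ⟨zero_le_one, le_rfl⟩
  have hzero : (0:ℝ) ∈ Set.Icc (0:ℝ) 1 := Set.mem_Icc.2 ⟨le_rfl, zero_le_one⟩
  have hf1 : f 1 = 0 := le_antisymm (by linarith [(hfb 1 hone).2]) (hf0 1 hone)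
  set S : Set ℝ := {κ : ℝ | 0 ≤ κ ∧ ∀ α ∈ Set.Icc (0:ℝ) 1, f (α + κ) - κ ≤ g α} with hS
  set T : Set ℝ := (fun π => bayesRisk f π - bayesRisk g π) '' Set.Icc (0:ℝ) 1 with hT
  have hdelta : deltaDiv f g = sInf S := rfl
  -- 1 ∈ S
  have h1S : (1:ℝ) ∈ S := by
    refine ⟨zero_le_one, fun α hα => ?_⟩
    have hfα1 : f (α + 1) = 0 := by
      rcases eq_or_lt_of_le hα.1 with h | h
      · rw [← h]; simpa using hf1
      · exact hfz _ (by linarith)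
    have := hg0 α hα
    linarith
  have hSne : S.Nonempty := ⟨1, h1S⟩
  have hSbd : BddBelow S := ⟨0, fun κ hκ => hκ.1⟩
  have hTne : T.Nonempty := ⟨_, Set.mem_image_of_mem _ hone⟩
  -- every element of T is ≤ every element of S
  have key : ∀ κ ∈ S, ∀ π ∈ Set.Icc (0:ℝ) 1, bayesRisk f π - bayesRisk g π ≤ κ := by
    intro κ hκ π hπ
    have hκ0 : 0 ≤ κ := hκ.1
    have h1π : (0:ℝ) ≤ 1 - π := by linarith [hπ.2]
    have hmain : bayesRisk f π - κ ≤ bayesRisk g π := by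
      refine risk_ge g π _ fun α hα => ?_
      have h1 : f (α + κ) - κ ≤ g α := hκ.2 α hα
      have h2 : bayesRisk f π ≤ π * (α + κ) + (1 - π) * f (α + κ) := by
        rcases le_or_gt (α + κ) 1 with h | h
        · exact risk_le f π hf0 hπ (Set.mem_Icc.2 ⟨by linarith [hα.1], h⟩)
        · have hz : f (α + κ) = 0 := hfz _ h
          have hb := risk_le f π hf0 hπ hone
          rw [hf1] at hb
          rw [hz]
          nlinarith [hπ.1]
      have h3 : (1 - π) * (f (α + κ) - κ) ≤ (1 - π) * g α :=
        mul_le_mul_of_nonneg_left h1 h1π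
      nlinarith [hπ.1]
    linarith
  have hTbd : BddAbove T := by
    refine ⟨1, ?_⟩
    rintro _ ⟨π, hπ, rfl⟩
    exact key 1 h1S π hπ
  set D : ℝ := sSup T with hD
  have hD0 : 0 ≤ D := by
    have h0T : bayesRisk f 0 - bayesRisk g 0 ∈ T := Set.mem_image_of_mem _ hzero
    have hmon : bayesRisk g 0 ≤ bayesRisk f 0 := by
      refine risk_ge f 0 _ fun α hα => ?_
      have h1 := risk_le g 0 hg0 hzero hα
      have h2 := hle α hα
      nlinarith
    have := le_csSup hTbd h0T
    linarith
  -- D ∈ S : the hard direction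
  have hDS : D ∈ S := by
    refine ⟨hD0, fun α₀ hα₀ => ?_⟩
    by_contra hcon
    push_neg at hcon
    set x₀ : ℝ := α₀ + D with hx₀
    have hx₀0 : 0 ≤ x₀ := by have := hα₀.1; positivity
    have hgα₀ : 0 ≤ g α₀ := hg0 α₀ hα₀
    have hfx₀pos : g α₀ + D < f x₀ := by linarith
    have hx₀le1 : x₀ ≤ 1 := by
      by_contra h
      push_neg at h
      have := hfz x₀ h
      linarith
    have hx₀lt1 : x₀ < 1 := by
      rcases eq_or_lt_of_le hx₀le1 with h | h
      · exfalso; rw [h, hf1] at hfx₀pos; linarith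
      · exact h
    have hx₀mem : x₀ ∈ Set.Icc (0:ℝ) 1 := ⟨hx₀0, hx₀le1⟩
    set c' : ℝ := (f x₀ + (g α₀ + D)) / 2 with hc'
    have hc'lt : c' < f x₀ := by simp only [hc']; linarith
    have hc'gt : g α₀ + D < c' := by simp only [hc']; linarith
    -- find y ∈ (x₀, 1] with c' < f y
    obtain ⟨y, hyf, hymem⟩ : ∃ y, c' < f y ∧ y ∈ Set.Ioc x₀ 1 := by
      have hcw : ContinuousWithinAt f (Set.Icc 0 1) x₀ := hfc x₀ hx₀mem
      have h1 : ∀ᶠ z in nhdsWithin x₀ (Set.Icc (0:ℝ) 1), c' < f z :=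
        hcw.eventually (eventually_gt_nhds hc'lt)
      have h2 : ∀ᶠ z in nhds x₀, z ∈ Set.Icc (0:ℝ) 1 → c' < f z :=
        eventually_nhdsWithin_iff.mp h1
      have h3 : ∀ᶠ z in nhdsWithin x₀ (Set.Ioi x₀), z ∈ Set.Ioc x₀ 1 :=
        Ioc_mem_nhdsGT hx₀lt1
      obtain ⟨y, hy1, hy2⟩ := ((h2.filter_mono nhdsWithin_le_nhds).and h3).exists
      exact ⟨y, hy1 ⟨hx₀0.trans hy2.1.le, hy2.2⟩, hy2⟩
    have hymemI : y ∈ Set.Icc (0:ℝ) 1 := ⟨hx₀0.trans hymem.1.le, hymem.2⟩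
    have hyx : 0 < y - x₀ := by linarith [hymem.1]
    have hfyx : f y ≤ f x₀ := hfa hx₀mem hymemI hymem.1.le
    obtain ⟨s, hsdef⟩ : ∃ s : ℝ, s = (f y - f x₀) / (y - x₀) := ⟨_, rfl⟩
    have hs0 : s ≤ 0 := by
      rw [hsdef]; exact div_nonpos_of_nonpos_of_nonneg (by linarith) (by linarith)
    have hs1 : s - 1 < 0 := by linarith
    have hs1' : (1:ℝ) - s > 0 := by linarith
    have hsne : s - 1 ≠ 0 := ne_of_lt hs1
    have hsne' : 1 - s ≠ 0 := ne_of_gt hs1'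
    obtain ⟨π, hπdef⟩ : ∃ π : ℝ, π = s / (s - 1) := ⟨_, rfl⟩
    have hπ0 : 0 ≤ π := by
      rw [hπdef]; exact div_nonneg_iff.mpr (Or.inr ⟨hs0, hs1.le⟩)
    have h1π : 1 - π = 1 / (1 - s) := by
      rw [hπdef]
      field_simp
      ring
    have h1πpos : 0 < 1 - π := by rw [h1π]; positivity
    have hπmem : π ∈ Set.Icc (0:ℝ) 1 := ⟨hπ0, by linarith⟩
    have hid : π + (1 - π) * s = 0 := by
      rw [h1π, hπdef]
      field_simp
      ring
    -- supporting line inequality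
    have hsupp : ∀ α ∈ Set.Icc (0:ℝ) 1, c' + s * (α - x₀) ≤ f α := by
      intro α hα
      rcases le_or_gt α y with hay | hay
      · rcases le_or_gt x₀ α with hxa | hxa
        · -- x₀ ≤ α ≤ y
          have hfya : f y ≤ f α := hfa hα hymemI hay
          have hsa : s * (α - x₀) ≤ 0 :=
            mul_nonpos_iff.mpr (Or.inr ⟨hs0, by linarith⟩)
          linarith
        · -- α < x₀
          have hsl : (f α - f x₀) / (α - x₀) ≤ s := hsdef ▸
            hfcx.secant_mono hx₀mem hα hymemI (ne_of_lt hxa) (ne_of_gt hymem.1)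
              (by linarith)
          have hne : α - x₀ ≠ 0 := sub_ne_zero.mpr (ne_of_lt hxa)
          have hcan : (f α - f x₀) / (α - x₀) * (α - x₀) = f α - f x₀ :=
            div_mul_cancel₀ _ hne
          have := mul_le_mul_of_nonpos_right hsl (by linarith : α - x₀ ≤ 0)
          rw [hcan] at this
          linarith
      · -- y < α
        have hsl : s ≤ (f α - f x₀) / (α - x₀) := hsdef ▸
          hfcx.secant_mono hx₀mem hymemI hα (ne_of_gt hymem.1)
            (ne_of_gt (by linarith [hymem.1] : x₀ < α)) hay.le
        have hne : α - x₀ ≠ 0 := ne_of_gt (by linarith [hymem.1] : (0:ℝ) < α - x₀)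
        have hcan : (f α - f x₀) / (α - x₀) * (α - x₀) = f α - f x₀ :=
          div_mul_cancel₀ _ hne
        have := mul_le_mul_of_nonneg_right hsl (by linarith : (0:ℝ) ≤ α - x₀)
        rw [hcan] at this
        linarith
    -- lower bound on bayesRisk f π
    have hRf : π * x₀ + (1 - π) * c' ≤ bayesRisk f π := by
      refine risk_ge f π _ fun α hα => ?_
      have h1 := hsupp α hα
      have h2 : (1 - π) * (c' + s * (α - x₀)) ≤ (1 - π) * f α :=
        mul_le_mul_of_nonneg_left h1 h1πpos.le
      have h4 : π * α + (1 - π) * (c' + s * (α - x₀)) = π * x₀ + (1 - π) * c' := by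
        linear_combination (α - x₀) * hid
      linarith
    have hRg : bayesRisk g π ≤ π * α₀ + (1 - π) * g α₀ := risk_le g π hg0 hπmem hα₀
    have hdiff_le : bayesRisk f π - bayesRisk g π ≤ D :=
      le_csSup hTbd (Set.mem_image_of_mem _ hπmem)
    have hexp : π * x₀ = π * α₀ + π * D := by rw [hx₀]; ring
    have hprod : (1 - π) * D < (1 - π) * (c' - g α₀) :=
      mul_lt_mul_of_pos_left (by linarith) h1πpos
    have hexp2 : (1 - π) * (c' - g α₀) = (1 - π) * c' - (1 - π) * g α₀ := by ring
    have hexp3 : π * D + (1 - π) * D = D := by ring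
    linarith
  rw [hdelta]
  apply le_antisymm
  · exact csInf_le hSbd hDS
  · refine le_csInf hSne fun κ hκ => csSup_le hTne ?_
    rintro _ ⟨π, hπ, rfl⟩
    exact key κ hκ π hπ
end
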